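/- For any positive integers n and l, the complete bipartite graph K_{n, n·l} has an interval total coloring whose minimum span equals its total chromatic number; in particular, for l ≥ 2, w_τ(K_{n,n·l}) = n·l + 1. -/

import Mathlib

namespace ITC

variable {V : Type*}

/-- A total coloring: proper on vertices, edges, and incident vertex-edge pairs. -/
def IsTotalColoring (G : SimpleGraph V) (cv : V → ℕ) (ce : Sym2 V → ℕ) : Prop :=
  (∀ u v, G.Adj u v → cv u ≠ cv v) ∧
  (∀ e f, e ∈ G.edgeSet → f ∈ G.edgeSet → e ≠ f → (∃ w, w ∈ e ∧ w ∈ f) → ce e ≠ ce f) ∧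
  (∀ v e, e ∈ G.edgeSet → v ∈ e → cv v ≠ ce e)

/-- The set of colors on a vertex `v` together with its incident edges. -/
def palette (G : SimpleGraph V) (cv : V → ℕ) (ce : Sym2 V → ℕ) (v : V) : Set ℕ :=
  insert (cv v) {c | ∃ e ∈ G.edgeSet, v ∈ e ∧ ce e = c}

/-- Degree of a vertex. -/
noncomputable def deg (G : SimpleGraph V) (v : V) : ℕ := (G.neighborSet v).ncard

/-- An interval total `t`-coloring. -/
def IsIntervalTotalColoring (G : SimpleGraph V) (t : ℕ) (cv : V → ℕ)
    (ce : Sym2 V → ℕ) : Prop :=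
  IsTotalColoring G cv ce ∧
  (∀ v, cv v ∈ Set.Icc 1 t) ∧ (∀ e ∈ G.edgeSet, ce e ∈ Set.Icc 1 t) ∧
  (∀ c ∈ Set.Icc 1 t, (∃ v, cv v = c) ∨ (∃ e ∈ G.edgeSet, ce e = c)) ∧
  (∀ v, ∃ a, palette G cv ce v = Set.Icc a (a + deg G v))

def HasIntervalTotalColoring (G : SimpleGraph V) (t : ℕ) : Prop :=
  ∃ cv ce, IsIntervalTotalColoring G t cv ce

/-- Minimum span of interval total colorings. -/
noncomputable def wtau (G : SimpleGraph V) : ℕ := sInf {t | HasIntervalTotalColoring G t}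

/-- Maximum span of interval total colorings. -/
noncomputable def Wtau (G : SimpleGraph V) : ℕ := sSup {t | HasIntervalTotalColoring G t}

/-- Total chromatic number: least `k` such that there is a total coloring
with colors in `{1, …, k}`. -/
noncomputable def totalChromaticNumber (G : SimpleGraph V) : ℕ :=
  sInf {k | ∃ cv ce, IsTotalColoring G cv ce ∧ (∀ v, cv v ∈ Set.Icc 1 k) ∧
    ∀ e ∈ G.edgeSet, ce e ∈ Set.Icc 1 k}

/-- A proper edge coloring. -/
def IsProperEdgeColoring (G : SimpleGraph V) (ce : Sym2 V → ℕ) : Prop :=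
  ∀ e f, e ∈ G.edgeSet → f ∈ G.edgeSet → e ≠ f → (∃ w, w ∈ e ∧ w ∈ f) → ce e ≠ ce f

/-- Colors appearing on the edges incident to `v`. -/
def edgePalette (G : SimpleGraph V) (ce : Sym2 V → ℕ) (v : V) : Set ℕ :=
  {c | ∃ e ∈ G.edgeSet, v ∈ e ∧ ce e = c}

/-- An interval (edge) `t`-coloring. -/
def IsIntervalEdgeColoring (G : SimpleGraph V) (t : ℕ) (ce : Sym2 V → ℕ) : Prop :=
  IsProperEdgeColoring G ce ∧
  (∀ e ∈ G.edgeSet, ce e ∈ Set.Icc 1 t) ∧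
  (∀ c ∈ Set.Icc 1 t, ∃ e ∈ G.edgeSet, ce e = c) ∧
  (∀ v, ∃ a, edgePalette G ce v = Set.Icc (a + 1) (a + deg G v))

/-- The hypercube `Q_n`. -/
def hypercube (n : ℕ) : SimpleGraph (Fin n → Bool) where
  Adj u v := ∃! i, u i ≠ v i
  symm := by
    constructor
    rintro u v ⟨i, hi, hu⟩
    exact ⟨i, Ne.symm hi, fun j hj => hu j (Ne.symm hj)⟩
  loopless := by
    constructor
    rintro u ⟨i, hi, -⟩
    exact hi rfl

/-- The complete graph on `Fin (2*r)` minus the perfect matching joining `i` and `i+r`. -/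
def Kminus (r : ℕ) : SimpleGraph (Fin (2 * r)) where
  Adj i j := i ≠ j ∧ ¬((i : ℕ) + r = (j : ℕ) ∨ (j : ℕ) + r = (i : ℕ))
  symm := by
    constructor
    rintro i j ⟨h1, h2⟩
    exact ⟨h1.symm, fun h => h2 h.symm⟩
  loopless := by
    constructor
    rintro i ⟨h1, -⟩
    exact h1 rfl

/-- Blow up each vertex of `H` into a copy of `β` (no edges inside copies). -/
def blowup {α : Type*} (H : SimpleGraph α) (β : Type*) : SimpleGraph (α × β) where
  Adj u v := H.Adj u.1 v.1
  symm := ⟨fun _ _ h => H.adj_symm h⟩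
  loopless := ⟨fun u h => H.ne_of_adj h rfl⟩

/-! Every vertex of a total coloring sees `deg + 1` distinct colors. Hence a total coloring of
`K_{n,nl}` uses at least `nl + 1` colors, and a palette contained in an interval of `deg + 1`
numbers is that interval, so an interval coloring only has to keep palettes inside such intervals.

Write a right vertex as `j = bn + r` and color the edge from the left vertex `i` by
`bn + (i + r) mod n + 1`: block `b` of the right side carries a cyclic Latin square on
`bn + 1, …, bn + n`, and every left vertex sees `1, …, nl`. The left vertices get `nl + 1` and the
block `b` gets `bn`, or `n + 1` when `b = 0`; this is proper as soon as `l ≠ 1`.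

For `l = 1`, `n + 1` colors do not suffice: each right vertex would see all of them, so the color
of a left vertex `a` would lie on an edge at every right vertex, and these `n` edges would form a
matching into the `n - 1` left vertices other than `a`. Coloring the left vertices `1`, the
Latin square `2, …, n + 1` and the right vertices `n + 2` uses `n + 2` colors. -/

open Function Set Sum

section TotalColoring

variable {G : SimpleGraph V} {cv : V → ℕ} {ce : Sym2 V → ℕ} {v : V}

lemma palette_eq_insert_image (G : SimpleGraph V) (cv : V → ℕ) (ce : Sym2 V → ℕ) (v : V) :
    palette G cv ce v = insert (cv v) ((fun w => ce s(v, w)) '' G.neighborSet v) := by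
  ext c
  simp only [palette, mem_insert_iff, mem_ofPred_eq, mem_image, SimpleGraph.mem_neighborSet]
  refine or_congr_right ⟨?_, ?_⟩
  · rintro ⟨e, he, hv, rfl⟩
    obtain ⟨w, rfl⟩ := Sym2.mem_iff_exists.mp hv
    exact ⟨w, he, rfl⟩
  · rintro ⟨w, hw, rfl⟩
    exact ⟨s(v, w), hw, Sym2.mem_mk_left _ _, rfl⟩

lemma exists_eq_of_mem_palette {c : ℕ} (hc : c ∈ palette G cv ce v) :
    (∃ w, cv w = c) ∨ ∃ e ∈ G.edgeSet, ce e = c := by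
  rcases hc with rfl | ⟨e, he, -, rfl⟩
  exacts [Or.inl ⟨v, rfl⟩, Or.inr ⟨e, he, rfl⟩]

namespace IsTotalColoring

lemma injOn_neighborSet (h : IsTotalColoring G cv ce) (v : V) :
    InjOn (fun w => ce s(v, w)) (G.neighborSet v) := by
  intro w hw w' hw' hc
  by_contra hne
  exact h.2.1 _ _ hw hw' (fun he => hne (Sym2.congr_right.mp he))
    ⟨v, Sym2.mem_mk_left _ _, Sym2.mem_mk_left _ _⟩ hc

lemma ncard_palette (h : IsTotalColoring G cv ce) (hv : (G.neighborSet v).Finite) :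
    (palette G cv ce v).ncard = deg G v + 1 := by
  rw [palette_eq_insert_image, ncard_insert_of_notMem _ (hv.image _),
    (h.injOn_neighborSet v).ncard_image, deg]
  rintro ⟨w, hw, hc⟩
  exact h.2.2 v _ hw (Sym2.mem_mk_left _ _) hc.symm

lemma palette_eq_Icc (h : IsTotalColoring G cv ce) (hv : (G.neighborSet v).Finite) {a : ℕ}
    (hsub : palette G cv ce v ⊆ Icc a (a + deg G v)) : palette G cv ce v = Icc a (a + deg G v) :=
  eq_of_subset_of_ncard_le hsub (by rw [h.ncard_palette hv, ncard_Icc_nat]; omega)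

lemma deg_add_one_le (h : IsTotalColoring G cv ce) (hv : (G.neighborSet v).Finite) {t : ℕ}
    (hcv : ∀ v, cv v ∈ Icc 1 t) (hce : ∀ e ∈ G.edgeSet, ce e ∈ Icc 1 t) : deg G v + 1 ≤ t := by
  have hsub : palette G cv ce v ⊆ Icc 1 t := by
    rintro c (rfl | ⟨e, he, -, rfl⟩)
    exacts [hcv v, hce e he]
  simpa [h.ncard_palette hv] using ncard_le_ncard hsub

end IsTotalColoring

lemma wtau_eq_and_totalChromaticNumber_eq {k : ℕ} (hk : HasIntervalTotalColoring G k)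
    (hlow : ∀ t cv ce, IsTotalColoring G cv ce → (∀ v, cv v ∈ Icc 1 t) →
      (∀ e ∈ G.edgeSet, ce e ∈ Icc 1 t) → k ≤ t) :
    wtau G = k ∧ totalChromaticNumber G = k := by
  refine ⟨IsLeast.csInf_eq ⟨hk, ?_⟩, ?_⟩
  · rintro t ⟨cv, ce, h, hcv, hce, -⟩
    exact hlow t cv ce h hcv hce
  obtain ⟨cv, ce, htot, hcv, hce, -⟩ := hk
  refine IsLeast.csInf_eq ⟨⟨cv, ce, htot, hcv, hce⟩, ?_⟩
  rintro t ⟨cv, ce, h, hcv, hce⟩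
  exact hlow t cv ce h hcv hce

end TotalColoring

section CompleteBipartite

variable {α β : Type*} {cv : α ⊕ β → ℕ} {ce : Sym2 (α ⊕ β) → ℕ}

lemma completeBipartiteGraph_adj_inl_inr (a : α) (b : β) :
    (completeBipartiteGraph α β).Adj (inl a) (inr b) := by
  simp [completeBipartiteGraph]

lemma completeBipartiteGraph_neighborSet_inl (a : α) :
    (completeBipartiteGraph α β).neighborSet (inl a) = range inr := by
  ext (x | x) <;> simp [completeBipartiteGraph]

lemma completeBipartiteGraph_neighborSet_inr (b : β) :
    (completeBipartiteGraph α β).neighborSet (inr b) = range inl := by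
  ext (x | x) <;> simp [completeBipartiteGraph]

lemma exists_eq_of_mem_edgeSet_completeBipartiteGraph {e : Sym2 (α ⊕ β)}
    (he : e ∈ (completeBipartiteGraph α β).edgeSet) : ∃ a b, e = s(inl a, inr b) := by
  induction e with
  | h x y =>
    rcases x with a | b <;> rcases y with a' | b' <;>
      simp_all [completeBipartiteGraph, Sym2.eq_swap]

lemma deg_completeBipartiteGraph_inl [Fintype β] (a : α) :
    deg (completeBipartiteGraph α β) (inl a) = Fintype.card β := by
  rw [deg, completeBipartiteGraph_neighborSet_inl, ncard_range_of_injective inr_injective,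
    Nat.card_eq_fintype_card]

lemma deg_completeBipartiteGraph_inr [Fintype α] (b : β) :
    deg (completeBipartiteGraph α β) (inr b) = Fintype.card α := by
  rw [deg, completeBipartiteGraph_neighborSet_inr, ncard_range_of_injective inl_injective,
    Nat.card_eq_fintype_card]

lemma palette_completeBipartiteGraph_inl (cv : α ⊕ β → ℕ) (ce : Sym2 (α ⊕ β) → ℕ) (a : α) :
    palette (completeBipartiteGraph α β) cv ce (inl a) =
      insert (cv (inl a)) (range fun b => ce s(inl a, inr b)) := by
  rw [palette_eq_insert_image, completeBipartiteGraph_neighborSet_inl, ← range_comp]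
  rfl

lemma palette_completeBipartiteGraph_inr (cv : α ⊕ β → ℕ) (ce : Sym2 (α ⊕ β) → ℕ) (b : β) :
    palette (completeBipartiteGraph α β) cv ce (inr b) =
      insert (cv (inr b)) (range fun a => ce s(inl a, inr b)) := by
  rw [palette_eq_insert_image, completeBipartiteGraph_neighborSet_inr, ← range_comp]
  simp only [comp_def, Sym2.eq_swap]

lemma palette_completeBipartiteGraph_inl_eq_Icc [Fintype β]
    (h : IsTotalColoring (completeBipartiteGraph α β) cv ce) {a : α} {c : ℕ}
    (hv : cv (inl a) ∈ Icc c (c + Fintype.card β))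
    (he : ∀ b, ce s(inl a, inr b) ∈ Icc c (c + Fintype.card β)) :
    palette (completeBipartiteGraph α β) cv ce (inl a) = Icc c (c + Fintype.card β) := by
  rw [← deg_completeBipartiteGraph_inl a]
  refine h.palette_eq_Icc (by simp [completeBipartiteGraph_neighborSet_inl, finite_range]) ?_
  rw [palette_completeBipartiteGraph_inl, deg_completeBipartiteGraph_inl]
  exact insert_subset hv (range_subset_iff.mpr he)

lemma palette_completeBipartiteGraph_inr_eq_Icc [Fintype α]
    (h : IsTotalColoring (completeBipartiteGraph α β) cv ce) {b : β} {c : ℕ}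
    (hv : cv (inr b) ∈ Icc c (c + Fintype.card α))
    (he : ∀ a, ce s(inl a, inr b) ∈ Icc c (c + Fintype.card α)) :
    palette (completeBipartiteGraph α β) cv ce (inr b) = Icc c (c + Fintype.card α) := by
  rw [← deg_completeBipartiteGraph_inr b]
  refine h.palette_eq_Icc (by simp [completeBipartiteGraph_neighborSet_inr, finite_range]) ?_
  rw [palette_completeBipartiteGraph_inr, deg_completeBipartiteGraph_inr]
  exact insert_subset hv (range_subset_iff.mpr he)

lemma card_add_one_le_of_isTotalColoring [Fintype β] (a : α)
    (h : IsTotalColoring (completeBipartiteGraph α β) cv ce) {t : ℕ} (hcv : ∀ x, cv x ∈ Icc 1 t)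
    (hce : ∀ e ∈ (completeBipartiteGraph α β).edgeSet, ce e ∈ Icc 1 t) :
    Fintype.card β + 1 ≤ t := by
  rw [← deg_completeBipartiteGraph_inl a]
  exact h.deg_add_one_le (by simp [completeBipartiteGraph_neighborSet_inl, finite_range]) hcv hce

lemma card_add_two_le_of_isTotalColoring [Fintype α] [Fintype β]
    (hcard : Fintype.card α = Fintype.card β) (a₀ : α)
    (h : IsTotalColoring (completeBipartiteGraph α β) cv ce) {t : ℕ} (hcv : ∀ x, cv x ∈ Icc 1 t)
    (hce : ∀ e ∈ (completeBipartiteGraph α β).edgeSet, ce e ∈ Icc 1 t) :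
    Fintype.card β + 2 ≤ t := by
  have hle := card_add_one_le_of_isTotalColoring a₀ h hcv hce
  by_contra! hlt
  obtain rfl : t = 1 + Fintype.card α := by omega
  have hmatch : ∀ b, ∃ a, ce s(inl a, inr b) = cv (inl a₀) := by
    intro b
    have hmem : cv (inl a₀) ∈ palette (completeBipartiteGraph α β) cv ce (inr b) := by
      rw [palette_completeBipartiteGraph_inr_eq_Icc h (hcv _)
        fun a => hce _ (completeBipartiteGraph_adj_inl_inr a b)]
      exact hcv _
    rw [palette_completeBipartiteGraph_inr] at hmem
    rcases hmem with hb | ⟨a, ha⟩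
    · exact absurd hb (h.1 _ _ (completeBipartiteGraph_adj_inl_inr a₀ b))
    · exact ⟨a, ha⟩
  choose g hg using hmatch
  have hinj : Injective g := fun b b' hb =>
    inr_injective <| h.injOn_neighborSet (inl (g b)) (completeBipartiteGraph_adj_inl_inr _ b)
      (by rw [hb]; exact completeBipartiteGraph_adj_inl_inr _ b')
      (show ce s(inl (g b), inr b) = ce s(inl (g b), inr b') by rw [hg, hb, hg])
  have hmiss : a₀ ∉ range g := by
    rintro ⟨b, hb⟩
    exact h.2.2 (inl a₀) _ (completeBipartiteGraph_adj_inl_inr (g b) b)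
      (by rw [hb]; exact Sym2.mem_mk_left _ _) (hg b).symm
  have := Fintype.card_lt_of_injective_of_notMem g hinj hmiss
  omega

def bipartiteEdgeColoring (f : α → β → ℕ) : Sym2 (α ⊕ β) → ℕ :=
  Sym2.lift ⟨fun x y => match x, y with
    | inl a, inr b | inr b, inl a => f a b
    | _, _ => 0, by rintro (a | b) (a' | b') <;> rfl⟩

@[simp]
lemma bipartiteEdgeColoring_mk (f : α → β → ℕ) (a : α) (b : β) :
    bipartiteEdgeColoring f s(inl a, inr b) = f a b := rfl

lemma bipartiteEdgeColoring_mem {f : α → β → ℕ} {s : Set ℕ} (hf : ∀ a b, f a b ∈ s) :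
    ∀ e ∈ (completeBipartiteGraph α β).edgeSet, bipartiteEdgeColoring f e ∈ s := by
  intro e he
  obtain ⟨a, b, rfl⟩ := exists_eq_of_mem_edgeSet_completeBipartiteGraph he
  exact hf a b

lemma isTotalColoring_bipartiteEdgeColoring {f : α → β → ℕ}
    (hadj : ∀ a b, cv (inl a) ≠ cv (inr b)) (hrow : ∀ a, Injective (f a))
    (hcol : ∀ b, Injective (f · b)) (hleft : ∀ a b, cv (inl a) ≠ f a b)
    (hright : ∀ a b, cv (inr b) ≠ f a b) :
    IsTotalColoring (completeBipartiteGraph α β) cv (bipartiteEdgeColoring f) := by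
  refine ⟨?_, ?_, ?_⟩
  · rintro (a | b) (a' | b') hxy
    · simp [completeBipartiteGraph] at hxy
    · exact hadj a b'
    · exact (hadj a' b).symm
    · simp [completeBipartiteGraph] at hxy
  · intro e e' he he' hne ⟨w, hw, hw'⟩
    obtain ⟨a, b, rfl⟩ := exists_eq_of_mem_edgeSet_completeBipartiteGraph he
    obtain ⟨a', b', rfl⟩ := exists_eq_of_mem_edgeSet_completeBipartiteGraph he'
    simp only [bipartiteEdgeColoring_mk]
    rcases Sym2.mem_iff.mp hw with rfl | rfl <;> rcases Sym2.mem_iff.mp hw' with hw' | hw' <;>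
      simp only [reduceCtorEq, inl.injEq, inr.injEq] at hw'
    · subst hw'
      exact (hrow a).ne fun hb => hne (by rw [hb])
    · subst hw'
      exact (hcol b).ne fun ha => hne (by rw [ha])
  · intro x e he hx
    obtain ⟨a, b, rfl⟩ := exists_eq_of_mem_edgeSet_completeBipartiteGraph he
    rcases Sym2.mem_iff.mp hx with rfl | rfl
    exacts [hleft a b, hright a b]

end CompleteBipartite

section CyclicColor

variable {n : ℕ}

def cyclicColor (n i j : ℕ) : ℕ := n * (j / n) + (i + j) % n

lemma cyclicColor_right_injective (hn : 0 < n) (i : ℕ) : Injective (cyclicColor n i) := by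
  intro j j' h
  have hmod : (i + j) % n = (i + j') % n := by
    simpa only [cyclicColor, Nat.mul_add_mod, Nat.mod_mod] using congrArg (· % n) h
  have hdiv : j / n = j' / n := by
    simpa only [cyclicColor, Nat.mul_add_div hn, Nat.div_eq_of_lt (Nat.mod_lt _ hn), add_zero]
      using congrArg (· / n) h
  have hj : j % n = j' % n := Nat.ModEq.add_left_cancel' i hmod
  rw [← Nat.div_add_mod j n, ← Nat.div_add_mod j' n, hdiv, hj]

lemma cyclicColor_left_injective (j : ℕ) : Injective fun i : Fin n => cyclicColor n i j := by
  intro i i' h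
  have hmod : (i + j) % n = (i' + j) % n := by simpa [cyclicColor] using h
  exact Fin.ext ((Nat.ModEq.add_right_cancel' j hmod).eq_of_lt_of_lt i.2 i'.2)

lemma cyclicColor_mem_Ico (hn : 0 < n) (i j : ℕ) :
    cyclicColor n i j ∈ Ico (n * (j / n)) (n * (j / n) + n) :=
  ⟨Nat.le_add_right _ _, Nat.add_lt_add_left (Nat.mod_lt _ hn) _⟩

lemma mul_div_add_le_of_lt_mul {l j : ℕ} (hj : j < n * l) : n * (j / n) + n ≤ n * l := by
  have hn : 0 < n := Nat.pos_of_ne_zero (by rintro rfl; simp at hj)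
  have : j / n + 1 ≤ l := Nat.div_lt_iff_lt_mul hn |>.mpr (by rwa [mul_comm])
  nlinarith

end CyclicColor

section Blocks

def blockVertexColoring (n l : ℕ) : Fin n ⊕ Fin (n * l) → ℕ :=
  Sum.elim (fun _ => n * l + 1) fun v => if v / n = 0 then n + 1 else n * (v / n)

def blockEdgeColoring (n l : ℕ) : Sym2 (Fin n ⊕ Fin (n * l)) → ℕ :=
  bipartiteEdgeColoring fun u v => cyclicColor n u v + 1

variable {n l : ℕ}

@[simp]
lemma blockEdgeColoring_mk (u : Fin n) (v : Fin (n * l)) :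
    blockEdgeColoring n l s(inl u, inr v) = cyclicColor n u v + 1 := rfl

lemma blockVertexColoring_inr_mem_Icc (hl : l ≠ 1) (v : Fin (n * l)) :
    blockVertexColoring n l (inr v) ∈ Icc 1 (n * l) := by
  have hn : 0 < n := Nat.pos_of_ne_zero (by rintro rfl; exact absurd v.2 (by simp))
  have hl2 : 2 ≤ l := by
    have : l ≠ 0 := by rintro rfl; exact absurd v.2 (by simp)
    omega
  have := mul_div_add_le_of_lt_mul v.2
  simp only [blockVertexColoring, elim_inr]
  split_ifs with h0
  · exact ⟨by omega, by nlinarith⟩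
  · exact ⟨Nat.mul_pos hn (Nat.pos_of_ne_zero h0), by omega⟩

lemma isTotalColoring_block (hn : 0 < n) (hl : l ≠ 1) :
    IsTotalColoring (completeBipartiteGraph (Fin n) (Fin (n * l))) (blockVertexColoring n l)
      (blockEdgeColoring n l) := by
  refine isTotalColoring_bipartiteEdgeColoring (fun u v => ?_)
    (fun u => (add_left_injective 1).comp
      ((cyclicColor_right_injective hn u).comp Fin.val_injective))
    (fun v => (add_left_injective 1).comp (cyclicColor_left_injective v)) (fun u v => ?_)
    (fun u v => ?_)
  · have := (blockVertexColoring_inr_mem_Icc hl v).2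
    simp only [blockVertexColoring, elim_inl, elim_inr] at this ⊢
    omega
  · have := (cyclicColor_mem_Ico hn u v).2
    have := mul_div_add_le_of_lt_mul v.2
    simp only [blockVertexColoring, elim_inl]
    omega
  · obtain ⟨h1, h2⟩ := cyclicColor_mem_Ico hn u v
    simp only [blockVertexColoring, elim_inr]
    split_ifs with h0
    · rw [h0] at h2
      omega
    · omega

lemma isIntervalTotalColoring_block (hn : 0 < n) (hl : l ≠ 1) :
    IsIntervalTotalColoring (completeBipartiteGraph (Fin n) (Fin (n * l))) (n * l + 1)
      (blockVertexColoring n l) (blockEdgeColoring n l) := by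
  have htot := isTotalColoring_block hn hl
  have hf (u : Fin n) (v : Fin (n * l)) : cyclicColor n u v + 1 ∈ Icc 1 (n * l) := by
    have := (cyclicColor_mem_Ico hn u v).2
    have := mul_div_add_le_of_lt_mul v.2
    simp only [mem_Icc]
    omega
  have hleft (u : Fin n) : palette (completeBipartiteGraph (Fin n) (Fin (n * l)))
      (blockVertexColoring n l) (blockEdgeColoring n l) (inl u) = Icc 1 (1 + n * l) := by
    refine (palette_completeBipartiteGraph_inl_eq_Icc htot ?_ fun v => ?_).trans
      (by rw [Fintype.card_fin]) <;> rw [Fintype.card_fin]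
    · simp [blockVertexColoring, add_comm]
    · simpa [add_comm 1] using Icc_subset_Icc_right (Nat.le_succ _) (hf u v)
  refine ⟨htot, ?_, bipartiteEdgeColoring_mem fun u v => ?_, fun c hc => ?_, ?_⟩
  · rintro (u | v)
    · simp [blockVertexColoring]
    · exact Icc_subset_Icc_right (Nat.le_succ _) (blockVertexColoring_inr_mem_Icc hl v)
  · exact Icc_subset_Icc_right (Nat.le_succ _) (hf u v)
  · apply exists_eq_of_mem_palette (v := inl ⟨0, hn⟩)
    rwa [hleft, add_comm]
  · rintro (u | v)
    · exact ⟨1, by rw [hleft, deg_completeBipartiteGraph_inl, Fintype.card_fin]⟩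
    · refine ⟨if v / n = 0 then 1 else n * (v / n), ?_⟩
      rw [deg_completeBipartiteGraph_inr]
      refine palette_completeBipartiteGraph_inr_eq_Icc htot ?_ fun u => ?_ <;>
        simp only [Fintype.card_fin, blockVertexColoring, elim_inr, blockEdgeColoring_mk, mem_Icc]
      · split_ifs <;> omega
      · obtain ⟨h1, h2⟩ := cyclicColor_mem_Ico hn u v
        split_ifs with h0
        · rw [h0] at h1 h2
          omega
        · omega

end Blocks

lemma isIntervalTotalColoring_square {n : ℕ} (hn : 0 < n) :
    IsIntervalTotalColoring (completeBipartiteGraph (Fin n) (Fin n)) (n + 2)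
      (Sum.elim (fun _ => 1) fun _ => n + 2)
      (bipartiteEdgeColoring fun u v => cyclicColor n u v + 2) := by
  set cv : Fin n ⊕ Fin n → ℕ := Sum.elim (fun _ => 1) fun _ => n + 2
  have hf (u v : Fin n) : cyclicColor n u v < n := by
    simpa [Nat.div_eq_of_lt v.2] using (cyclicColor_mem_Ico hn u v).2
  have htot : IsTotalColoring (completeBipartiteGraph _ _) cv
      (bipartiteEdgeColoring fun u v => cyclicColor n u v + 2) :=
    isTotalColoring_bipartiteEdgeColoring (fun u v => by simp [cv])
      (fun u => (add_left_injective 2).comp ((cyclicColor_right_injective hn u).comp Fin.val_injective))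
      (fun v => (add_left_injective 2).comp (cyclicColor_left_injective v))
      (fun u v => by simp [cv]) (fun u v => by have := hf u v; simp only [cv, elim_inr]; omega)
  have hleft (u : Fin n) : palette (completeBipartiteGraph (Fin n) (Fin n)) cv
      (bipartiteEdgeColoring fun u v => cyclicColor n u v + 2) (inl u) = Icc 1 (1 + n) := by
    refine (palette_completeBipartiteGraph_inl_eq_Icc htot ?_ fun v => ?_).trans
      (by rw [Fintype.card_fin]) <;>
      simp only [Fintype.card_fin, cv, elim_inl, bipartiteEdgeColoring_mk, mem_Icc]
    · omega
    · have := hf u v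
      omega
  refine ⟨htot, ?_, bipartiteEdgeColoring_mem fun u v => ?_, fun c hc => ?_, ?_⟩
  · rintro (u | v) <;> simp [cv]
  · have := hf u v
    simp only [mem_Icc]
    omega
  · obtain rfl | hc' := eq_or_ne c (n + 2)
    · exact Or.inl ⟨inr ⟨0, hn⟩, rfl⟩
    · apply exists_eq_of_mem_palette (v := inl ⟨0, hn⟩)
      rw [hleft, mem_Icc]
      have := hc.2
      exact ⟨hc.1, by omega⟩
  · rintro (u | v)
    · exact ⟨1, by rw [hleft, deg_completeBipartiteGraph_inl, Fintype.card_fin]⟩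
    · refine ⟨2, ?_⟩
      rw [deg_completeBipartiteGraph_inr]
      refine palette_completeBipartiteGraph_inr_eq_Icc htot ?_ fun u => ?_ <;>
        simp only [Fintype.card_fin, cv, elim_inr, bipartiteEdgeColoring_mk, mem_Icc]
      · omega
      · have := hf u v
        omega

theorem stmt2_general (n l : ℕ) (hn : 0 < n) :
    (∃ t, HasIntervalTotalColoring (completeBipartiteGraph (Fin n) (Fin (n * l))) t) ∧
    wtau (completeBipartiteGraph (Fin n) (Fin (n * l))) =
      totalChromaticNumber (completeBipartiteGraph (Fin n) (Fin (n * l))) ∧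
    (2 ≤ l → wtau (completeBipartiteGraph (Fin n) (Fin (n * l))) = n * l + 1) := by
  obtain rfl | hl := eq_or_ne l 1
  · rw [mul_one]
    have hsq := isIntervalTotalColoring_square hn
    obtain ⟨hw, hχ⟩ := wtau_eq_and_totalChromaticNumber_eq ⟨_, _, hsq⟩ fun t cv ce h hcv hce => by
      simpa using card_add_two_le_of_isTotalColoring rfl ⟨0, hn⟩ h hcv hce
    exact ⟨⟨_, _, _, hsq⟩, hw.trans hχ.symm, by omega⟩
  · have hA := isIntervalTotalColoring_block hn hl
    obtain ⟨hw, hχ⟩ := wtau_eq_and_totalChromaticNumber_eq ⟨_, _, hA⟩ fun t cv ce h hcv hce => by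
      simpa using card_add_one_le_of_isTotalColoring ⟨0, hn⟩ h hcv hce
    exact ⟨⟨_, _, _, hA⟩, hw.trans hχ.symm, fun _ => hw⟩

theorem stmt2 (n l : ℕ) (hn : 0 < n) (hl : 0 < l) :
    (∃ t, HasIntervalTotalColoring (completeBipartiteGraph (Fin n) (Fin (n * l))) t) ∧
    wtau (completeBipartiteGraph (Fin n) (Fin (n * l))) =
      totalChromaticNumber (completeBipartiteGraph (Fin n) (Fin (n * l))) ∧
    (2 ≤ l → wtau (completeBipartiteGraph (Fin n) (Fin (n * l))) = n * l + 1) :=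
  stmt2_general n l hn

end ITC
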